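/- Let A be a positive bounded self-adjoint operator on a right quaternionic Hilbert space with m(A) = inf_{‖φ‖=1}⟨Aφ,φ⟩ and M(A) = sup_{‖φ‖=1}⟨Aφ,φ⟩. If λ ∈ ℍ and λ ∉ [m(A), M(A)] (as a real interval, λ not a real number in it), then R_λ(A) = A² − 2Re(λ)A + |λ|²I is injective with closed range, and in fact ‖R_λ(A)ψ‖ ≥ d²‖ψ‖ for all ψ, where d = dist(λ, [m(A), M(A)]). -/

import Mathlib

noncomputable section

open MulOpposite

abbrev Quat := Quaternion ℝ

class RQH (V : Type*) [NormedAddCommGroup V] [Module Quatᵐᵒᵖ V] where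
  inn : V → V → Quat
  conj_symm : ∀ φ ψ : V, star (inn φ ψ) = inn ψ φ
  add_right : ∀ φ ψ ω : V, inn φ (ψ + ω) = inn φ ψ + inn φ ω
  smul_right : ∀ (φ ψ : V) (q : Quat), inn φ (op q • ψ) = inn φ ψ * q
  norm_sq : ∀ φ : V, inn φ φ = ((‖φ‖ ^ 2 : ℝ) : Quat)

open RQH

variable {V : Type*} [NormedAddCommGroup V] [Module Quatᵐᵒᵖ V] [CompleteSpace V] [RQH V]

def IsBddRL (A : V → V) : Prop :=
  (∀ x y : V, A (x + y) = A x + A y) ∧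
  (∀ (q : Quatᵐᵒᵖ) (x : V), A (q • x) = q • A x) ∧
  (∃ C : ℝ, ∀ x : V, ‖A x‖ ≤ C * ‖x‖)

def IsSA (A : V → V) : Prop := ∀ φ ψ : V, inn (A φ) ψ = inn φ (A ψ)

def IsPos (A : V → V) : Prop := ∀ φ : V, ∃ r : ℝ, 0 ≤ r ∧ inn (A φ) φ = (r : Quat)

def opN (A : V → V) : ℝ := sSup { r : ℝ | ∃ φ : V, ‖φ‖ = 1 ∧ r = ‖A φ‖ }

def mA (A : V → V) : ℝ := sInf { r : ℝ | ∃ φ : V, ‖φ‖ = 1 ∧ r = (inn (A φ) φ).re }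

def MA (A : V → V) : ℝ := sSup { r : ℝ | ∃ φ : V, ‖φ‖ = 1 ∧ r = (inn (A φ) φ).re }

def Rq (A : V → V) (l : Quat) (ψ : V) : V :=
  A (A ψ) - op ((2 * l.re : ℝ) : Quat) • A ψ + op ((‖l‖ ^ 2 : ℝ) : Quat) • ψ

def SInv (T : V → V) : Prop :=
  ∃ B : V → V, IsBddRL B ∧ (∀ x, T (B x) = x) ∧ (∀ x, B (T x) = x)

def sspec (A : V → V) : Set Quat := { l | ¬ SInv (Rq A l) }

/-!
Write `a = Re λ` and `R = R_λ(A)`. Self-adjointness gives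
`Re⟨Rψ, ψ⟩ = ‖Aψ - aψ‖² + (|λ|² - a²)‖ψ‖²`. Since `Re⟨Aψ, ψ⟩ ∈ [m‖ψ‖², M‖ψ‖²]`, Cauchy–Schwarz
gives `‖Aψ - aψ‖ ≥ |a - p|‖ψ‖` for the point `p` of `[m, M]` nearest to `a`, hence
`‖Rψ‖‖ψ‖ ≥ Re⟨Rψ, ψ⟩ ≥ |λ - p|²‖ψ‖² ≥ d²‖ψ‖²`. A bounded additive map satisfying such a lower
bound with `d > 0` is antilipschitz, so it is injective and, `V` being complete, has closed range.
-/

lemma Quaternion.sq_norm_sub_coe (l : Quat) (p : ℝ) :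
    ‖l - (p : Quat)‖ ^ 2 = (l.re - p) ^ 2 + (‖l‖ ^ 2 - l.re ^ 2) := by
  simp only [sq, ← Quaternion.normSq_eq_norm_mul_self, Quaternion.normSq_def',
    Quaternion.re_sub, Quaternion.imI_sub, Quaternion.imJ_sub, Quaternion.imK_sub,
    Quaternion.re_coe, Quaternion.imI_coe, Quaternion.imJ_coe, Quaternion.imK_coe]
  ring

lemma abs_sub_clamp_mul_le {m M a q n : ℝ} (hn : 0 ≤ n) (hq : q ∈ Set.Icc (m * n) (M * n)) :
    |a - max m (min a M)| * n ≤ |q - a * n| := by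
  obtain ⟨hmq, hqM⟩ := hq
  have hclamp : |a - max m (min a M)| ≤ max (max (m - a) (a - M)) 0 := by grind
  calc |a - max m (min a M)| * n ≤ max (max (m - a) (a - M)) 0 * n := by gcongr
    _ = max (max ((m - a) * n) ((a - M) * n)) 0 := by
      rw [max_mul_of_nonneg _ _ hn, max_mul_of_nonneg _ _ hn, zero_mul]
    _ ≤ |q - a * n| := by
      refine max_le (max_le ?_ ?_) (abs_nonneg _)
      · linarith [le_abs_self (q - a * n)]
      · linarith [neg_abs_le (q - a * n)]

section

omit [CompleteSpace V]

namespace RQH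

lemma inn_sub_right (φ ψ ω : V) : inn φ (ψ - ω) = inn φ ψ - inn φ ω :=
  map_sub (AddMonoidHom.mk' (inn φ) (add_right φ)) ψ ω

lemma inn_zero_right (φ : V) : inn φ 0 = 0 :=
  map_zero (AddMonoidHom.mk' (inn φ) (add_right φ))

lemma inn_zero_left (φ : V) : inn 0 φ = 0 := by
  rw [← conj_symm, inn_zero_right, star_zero]

lemma inn_add_left (φ ψ ω : V) : inn (φ + ψ) ω = inn φ ω + inn ψ ω := by
  rw [← conj_symm, add_right, star_add, conj_symm, conj_symm]

lemma inn_sub_left (φ ψ ω : V) : inn (φ - ψ) ω = inn φ ω - inn ψ ω := by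
  rw [← conj_symm, inn_sub_right, star_sub, conj_symm, conj_symm]

lemma inn_smul_left (q : Quat) (φ ψ : V) : inn (op q • φ) ψ = star q * inn φ ψ := by
  rw [← conj_symm, smul_right, star_mul, conj_symm]

lemma re_inn_comm (φ ψ : V) : (inn φ ψ).re = (inn ψ φ).re := by
  rw [← conj_symm φ ψ, Quaternion.re_star]

lemma re_inn_self (φ : V) : (inn φ φ).re = ‖φ‖ ^ 2 := by
  rw [norm_sq, Quaternion.re_coe]

lemma re_inn_real_smul_left (r : ℝ) (φ ψ : V) :
    (inn (op (r : Quat) • φ) ψ).re = r * (inn φ ψ).re := by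
  rw [inn_smul_left, Quaternion.star_coe, Quaternion.coe_mul_eq_smul, Quaternion.re_smul,
    smul_eq_mul]

lemma re_inn_real_smul_right (r : ℝ) (φ ψ : V) :
    (inn φ (op (r : Quat) • ψ)).re = r * (inn φ ψ).re := by
  rw [smul_right, Quaternion.mul_coe_eq_smul, Quaternion.re_smul, smul_eq_mul]

lemma norm_sub_sq_eq (φ ψ : V) : ‖φ - ψ‖ ^ 2 = ‖φ‖ ^ 2 - 2 * (inn φ ψ).re + ‖ψ‖ ^ 2 := by
  rw [← re_inn_self, inn_sub_left, inn_sub_right, inn_sub_right]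
  simp only [Quaternion.re_sub, re_inn_self, re_inn_comm ψ φ]
  ring

lemma norm_op_smul (q : Quat) (x : V) : ‖op q • x‖ = ‖q‖ * ‖x‖ := by
  have hsq : ‖op q • x‖ ^ 2 = (‖q‖ * ‖x‖) ^ 2 := by
    rw [← re_inn_self, inn_smul_left, smul_right, norm_sq, Quaternion.coe_commutes, ← mul_assoc,
      Quaternion.star_mul_self, ← Quaternion.coe_mul, Quaternion.re_coe,
      Quaternion.normSq_eq_norm_mul_self]
    ring
  exact (sq_eq_sq₀ (norm_nonneg _) (by positivity)).mp hsq

lemma norm_real_smul (r : ℝ) (x : V) : ‖op (r : Quat) • x‖ = |r| * ‖x‖ := by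
  rw [norm_op_smul, Quaternion.norm_coe, Real.norm_eq_abs]

lemma re_inn_le (φ ψ : V) : (inn φ ψ).re ≤ ‖φ‖ * ‖ψ‖ := by
  rcases (mul_nonneg (norm_nonneg φ) (norm_nonneg ψ)).eq_or_lt with h | h
  · rcases mul_eq_zero.mp h.symm with h | h <;> rw [norm_eq_zero] at h <;>
      simp [h, inn_zero_left, inn_zero_right, Quaternion.re_zero]
  -- expand `0 ≤ ‖‖ψ‖φ - ‖φ‖ψ‖²`
  have h0 := sq_nonneg ‖op (‖ψ‖ : Quat) • φ - op (‖φ‖ : Quat) • ψ‖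
  rw [norm_sub_sq_eq, norm_real_smul, norm_real_smul, re_inn_real_smul_left,
    re_inn_real_smul_right, abs_norm, abs_norm] at h0
  nlinarith

lemma abs_re_inn_le (φ ψ : V) : |(inn φ ψ).re| ≤ ‖φ‖ * ‖ψ‖ := by
  have h := re_inn_le (op ((-1 : ℝ) : Quat) • φ) ψ
  rw [re_inn_real_smul_left, norm_real_smul, abs_neg, abs_one, one_mul] at h
  exact abs_le.mpr ⟨by linarith, re_inn_le φ ψ⟩

end RQH

omit [RQH V] in
lemma Rq_add {A : V → V} (hadd : ∀ x y : V, A (x + y) = A x + A y) (l : Quat) (x y : V) :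
    Rq A l (x + y) = Rq A l x + Rq A l y := by
  simp only [Rq, hadd, smul_add]
  abel

lemma exists_norm_Rq_le {A : V → V} (hbd : ∃ C : ℝ, ∀ x : V, ‖A x‖ ≤ C * ‖x‖) (l : Quat) :
    ∃ K : ℝ, ∀ ψ : V, ‖Rq A l ψ‖ ≤ K * ‖ψ‖ := by
  obtain ⟨C, hC⟩ := hbd
  have hA : ∀ x, ‖A x‖ ≤ |C| * ‖x‖ := fun x => (hC x).trans (by gcongr; exact le_abs_self C)
  refine ⟨|C| * |C| + |2 * l.re| * |C| + |‖l‖ ^ 2|, fun ψ => ?_⟩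
  calc ‖Rq A l ψ‖
      ≤ ‖A (A ψ)‖ + ‖op ((2 * l.re : ℝ) : Quat) • A ψ‖ + ‖op ((‖l‖ ^ 2 : ℝ) : Quat) • ψ‖ :=
        (norm_add_le _ _).trans (add_le_add_left (norm_sub_le _ _) _)
    _ ≤ |C| * (|C| * ‖ψ‖) + |2 * l.re| * (|C| * ‖ψ‖) + |‖l‖ ^ 2| * ‖ψ‖ := by
        rw [norm_real_smul, norm_real_smul]
        gcongr
        · exact (hA _).trans (by gcongr; exact hA ψ)
        · exact hA ψ
    _ = _ := by ring

-- `mA A` and `MA A` are, by definition, the `sInf` and `sSup` of this set.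
def reNumRange (A : V → V) : Set ℝ := { r | ∃ φ : V, ‖φ‖ = 1 ∧ r = (inn (A φ) φ).re }

lemma abs_le_of_mem_reNumRange {A : V → V} {C : ℝ} (hC : ∀ x : V, ‖A x‖ ≤ C * ‖x‖) {r : ℝ}
    (hr : r ∈ reNumRange A) : |r| ≤ C := by
  obtain ⟨φ, hφ, rfl⟩ := hr
  calc |(inn (A φ) φ).re| ≤ ‖A φ‖ * ‖φ‖ := abs_re_inn_le _ _
    _ ≤ C := by simpa [hφ] using hC φ

lemma div_mem_reNumRange {A : V → V} (hsmul : ∀ (q : Quatᵐᵒᵖ) (x : V), A (q • x) = q • A x)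
    {ψ : V} (hψ : ψ ≠ 0) : (inn (A ψ) ψ).re / ‖ψ‖ ^ 2 ∈ reNumRange A := by
  have hn : 0 < ‖ψ‖ := norm_pos_iff.mpr hψ
  refine ⟨op ((‖ψ‖⁻¹ : ℝ) : Quat) • ψ, ?_, ?_⟩
  · rw [norm_real_smul, abs_inv, abs_norm, inv_mul_cancel₀ hn.ne']
  · rw [hsmul, re_inn_real_smul_left, re_inn_real_smul_right]
    field_simp

lemma re_inn_mem_Icc {A : V → V} (hA : IsBddRL A) (ψ : V) :
    (inn (A ψ) ψ).re ∈ Set.Icc (mA A * ‖ψ‖ ^ 2) (MA A * ‖ψ‖ ^ 2) := by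
  obtain ⟨-, hsmul, C, hC⟩ := hA
  rcases eq_or_ne ψ 0 with rfl | hψ
  · simp [inn_zero_right, Quaternion.re_zero]
  have hn : 0 < ‖ψ‖ ^ 2 := by positivity
  have hmem := div_mem_reNumRange hsmul hψ
  have hbdd : ∀ r ∈ reNumRange A, -C ≤ r ∧ r ≤ C := fun r hr =>
    abs_le.mp (abs_le_of_mem_reNumRange hC hr)
  constructor
  · rw [← le_div_iff₀ hn]
    exact csInf_le ⟨-C, fun r hr => (hbdd r hr).1⟩ hmem
  · rw [← div_le_iff₀ hn]
    exact le_csSup ⟨C, fun r hr => (hbdd r hr).2⟩ hmem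

lemma mA_le_MA [Nontrivial V] {A : V → V} (hA : IsBddRL A) : mA A ≤ MA A := by
  obtain ⟨ψ, hψ⟩ := exists_ne (0 : V)
  obtain ⟨hm, hM⟩ := re_inn_mem_Icc hA ψ
  exact le_of_mul_le_mul_right (hm.trans hM) (by positivity)

lemma re_inn_Rq {A : V → V} (hsa : IsSA A) (l : Quat) (ψ : V) :
    (inn (Rq A l ψ) ψ).re = ‖A ψ - op (l.re : Quat) • ψ‖ ^ 2 + (‖l‖ ^ 2 - l.re ^ 2) * ‖ψ‖ ^ 2 := by
  rw [Rq, inn_add_left, inn_sub_left, Quaternion.re_add, Quaternion.re_sub, hsa,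
    re_inn_real_smul_left, re_inn_real_smul_left, re_inn_self, re_inn_self, norm_sub_sq_eq,
    re_inn_real_smul_right, norm_real_smul, mul_pow, sq_abs]
  ring

lemma abs_sub_clamp_mul_norm_le {A : V → V} (hA : IsBddRL A) (a : ℝ) (ψ : V) :
    |a - max (mA A) (min a (MA A))| * ‖ψ‖ ≤ ‖A ψ - op (a : Quat) • ψ‖ := by
  rcases (norm_nonneg ψ).eq_or_lt with hψ | hψ
  · rw [← hψ, mul_zero]
    exact norm_nonneg _
  refine le_of_mul_le_mul_right ?_ hψ
  calc |a - max (mA A) (min a (MA A))| * ‖ψ‖ * ‖ψ‖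
      = |a - max (mA A) (min a (MA A))| * ‖ψ‖ ^ 2 := by ring
    _ ≤ |(inn (A ψ) ψ).re - a * ‖ψ‖ ^ 2| :=
      abs_sub_clamp_mul_le (by positivity) (re_inn_mem_Icc hA ψ)
    _ = |(inn (A ψ - op (a : Quat) • ψ) ψ).re| := by
      rw [inn_sub_left, Quaternion.re_sub, re_inn_real_smul_left, re_inn_self]
    _ ≤ ‖A ψ - op (a : Quat) • ψ‖ * ‖ψ‖ := abs_re_inn_le _ _

lemma sq_infDist_mul_norm_le_norm_Rq {A : V → V} (hA : IsBddRL A) (hsa : IsSA A) (l : Quat)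
    (ψ : V) :
    (Metric.infDist l ((fun r : ℝ => (r : Quat)) '' Set.Icc (mA A) (MA A))) ^ 2 * ‖ψ‖
      ≤ ‖Rq A l ψ‖ := by
  rcases (norm_nonneg ψ).eq_or_lt with hψ | hψ
  · rw [← hψ, mul_zero]
    exact norm_nonneg _
  have : Nontrivial V := ⟨⟨ψ, 0, norm_pos_iff.mp hψ⟩⟩
  set p := max (mA A) (min l.re (MA A))
  have hp : p ∈ Set.Icc (mA A) (MA A) :=
    ⟨le_max_left _ _, max_le (mA_le_MA hA) (min_le_right _ _)⟩
  have hd : Metric.infDist l ((fun r : ℝ => (r : Quat)) '' Set.Icc (mA A) (MA A)) ≤ ‖l - p‖ :=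
    dist_eq_norm l p ▸ Metric.infDist_le_dist_of_mem ⟨p, hp, rfl⟩
  refine le_of_mul_le_mul_right ?_ hψ
  calc _ ≤ ‖l - p‖ ^ 2 * ‖ψ‖ * ‖ψ‖ := by gcongr; exact Metric.infDist_nonneg
    _ = ((l.re - p) ^ 2 + (‖l‖ ^ 2 - l.re ^ 2)) * ‖ψ‖ ^ 2 := by
      rw [Quaternion.sq_norm_sub_coe]; ring
    _ ≤ ‖A ψ - op (l.re : Quat) • ψ‖ ^ 2 + (‖l‖ ^ 2 - l.re ^ 2) * ‖ψ‖ ^ 2 := by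
      rw [add_mul, ← sq_abs, ← mul_pow]
      gcongr
      exact abs_sub_clamp_mul_norm_le hA l.re ψ
    _ = (inn (Rq A l ψ) ψ).re := (re_inn_Rq hsa l ψ).symm
    _ ≤ ‖Rq A l ψ‖ * ‖ψ‖ := re_inn_le _ _

end

theorem stmt9_general [Nontrivial V] (A : V → V) (hA : IsBddRL A) (hsa : IsSA A)
    (l : Quat) (hl : ∀ r ∈ Set.Icc (mA A) (MA A), l ≠ (r : Quat)) :
    (∀ ψ : V,
        (Metric.infDist l ((fun r : ℝ => (r : Quat)) '' Set.Icc (mA A) (MA A))) ^ 2 * ‖ψ‖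
          ≤ ‖Rq A l ψ‖) ∧
      Function.Injective (Rq A l) ∧ IsClosed (Set.range (Rq A l)) := by
  have hest := sq_infDist_mul_norm_le_norm_Rq hA hsa l
  set I := (fun r : ℝ => (r : Quat)) '' Set.Icc (mA A) (MA A)
  have hlI : l ∉ I := by
    rintro ⟨r, hr, rfl⟩
    exact hl r hr rfl
  have hd : 0 < Metric.infDist l I :=
    ((isCompact_Icc.image Quaternion.continuous_coe).isClosed.notMem_iff_infDist_pos
      ⟨_, _, ⟨le_rfl, mA_le_MA hA⟩, rfl⟩).mp hlI
  let R : V →+ V := AddMonoidHom.mk' (Rq A l) (Rq_add hA.1 l)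
  obtain ⟨K, hK⟩ : ∃ K, AntilipschitzWith K R :=
    antilipschitzWith_iff_exists_mul_le_norm.mpr ⟨_, pow_pos hd 2, hest⟩
  obtain ⟨C, hC⟩ := exists_norm_Rq_le hA.2.2 l
  exact ⟨hest, hK.injective,
    hK.isClosed_range (AddMonoidHomClass.uniformContinuous_of_bound R C hC)⟩

/-- If λ ∉ [m(A), M(A)] then ‖R_λ(A)ψ‖ ≥ d²‖ψ‖, R_λ(A) is injective with closed range. -/
theorem stmt9 [Nontrivial V] (A : V → V) (hA : IsBddRL A) (hsa : IsSA A) (hpos : IsPos A)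
    (l : Quat) (hl : ∀ r ∈ Set.Icc (mA A) (MA A), l ≠ (r : Quat)) :
    (∀ ψ : V,
        (Metric.infDist l ((fun r : ℝ => (r : Quat)) '' Set.Icc (mA A) (MA A))) ^ 2 * ‖ψ‖
          ≤ ‖Rq A l ψ‖) ∧
      Function.Injective (Rq A l) ∧ IsClosed (Set.range (Rq A l)) :=
  stmt9_general A hA hsa l hl
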